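/- Let ζ be a countable ordinal and let C ⊆ (2^ℕ)^ζ be a closed set of positive measure with respect to the product over ζ of copies of the coin-flipping measure on 2^ℕ. Then there is a closed set C* ⊆ C of positive measure such that for every ξ < ζ and every ȳ ∈ (2^ℕ)^ξ, the section (C*)_{ȳ} = { ȳ' ∈ (2^ℕ)^{[ξ,ζ)} : ȳ⌢ȳ' ∈ C* } is either empty or has positive measure in (2^ℕ)^{[ξ,ζ)}. -/

import Mathlib

open MeasureTheory

/-- `μ` is the product over the index set `I` of copies of the coin-flipping measure
on the Cantor space `ℕ → Bool`: every cylinder determined by finitely many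
coordinate pairs has the expected measure. -/
def IsCantorProductMeasure {I : Type*} (μ : Measure (I → (ℕ → Bool))) : Prop :=
  ∀ (s : Finset (I × ℕ)) (b : I × ℕ → Bool),
    μ {x | ∀ p ∈ s, x p.1 p.2 = b p} = (2 : ENNReal)⁻¹ ^ s.card

/-!
Enumerate the cuts below `ζ` as `ord 0, ord 1, …` and prune `C` along them: at step `k`
discard the points whose section over their initial segment below `ord k` has measure
`< δ k = μ C / 4 ^ (k + 1)`. By Fubini, these discarded points have measure `≤ δ k` (a
Markov-type inequality), both in the whole space and inside any section at a cut
`ξ ≤ ord k`; at a cut `ξ ≥ ord k` a section is either emptied or left unchanged. The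
section measure of a closed set is upper semicontinuous (compactness of the tail and outer
regularity), so every pruned set is closed. The limit therefore has measure
`≥ μ C - ∑ δ k > 0`, and its nonempty sections at `ξ = ord n` have measure
`≥ δ n - ∑_{k > n} δ k > 0`.
-/

open Set Function
open scoped ENNReal

section CantorCylinder

variable {κ : Type*}

def cantorCylinder (s : Finset (κ × ℕ)) (b : κ × ℕ → Bool) : Set (κ → ℕ → Bool) :=
  {x | ∀ p ∈ s, x p.1 p.2 = b p}

def cantorCylinders (κ : Type*) : Set (Set (κ → ℕ → Bool)) :=
  {S | ∃ s b, cantorCylinder s b = S}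

lemma measurableSet_cantorCylinder (s : Finset (κ × ℕ)) (b : κ × ℕ → Bool) :
    MeasurableSet (cantorCylinder s b) := by
  simp only [cantorCylinder, Set.ofPred_forall]
  exact .biInter s.countable_toSet fun p _ =>
    measurableSet_eq_fun (by fun_prop) measurable_const

lemma cantorCylinder_union [DecidableEq κ] (s t : Finset (κ × ℕ)) (b : κ × ℕ → Bool) :
    cantorCylinder (s ∪ t) b = cantorCylinder s b ∩ cantorCylinder t b := by
  ext x
  simp only [cantorCylinder, Finset.mem_union, mem_inter_iff, mem_ofPred_eq]
  grind

lemma isPiSystem_cantorCylinders (κ : Type*) : IsPiSystem (cantorCylinders κ) := by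
  classical
  rintro _ ⟨s, b, rfl⟩ _ ⟨t, c, rfl⟩ ⟨z, hzs, hzt⟩
  refine ⟨s ∪ t, s.piecewise b c, ?_⟩
  simp only [cantorCylinder, mem_ofPred_eq] at hzs hzt
  ext x
  simp only [cantorCylinder, Finset.mem_union, mem_inter_iff, mem_ofPred_eq]
  grind [Finset.piecewise_eq_of_mem, Finset.piecewise_eq_of_notMem]

lemma generateFrom_cantorCylinders (κ : Type*) :
    MeasurableSpace.generateFrom (cantorCylinders κ) = MeasurableSpace.pi := by
  refine le_antisymm (MeasurableSpace.generateFrom_le ?_) ?_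
  · rintro _ ⟨s, b, rfl⟩
    exact measurableSet_cantorCylinder s b
  · refine iSup_le fun i => MeasurableSpace.comap_le_iff_le_map.2 <|
      iSup_le fun n => MeasurableSpace.comap_le_iff_le_map.2 fun c _ => ?_
    change MeasurableSet[MeasurableSpace.generateFrom (cantorCylinders κ)]
      ((fun x : κ → ℕ → Bool => x i n) ⁻¹' c)
    have : (fun x : κ → ℕ → Bool => x i n) ⁻¹' c =
        ⋃ d ∈ c, cantorCylinder {(i, n)} fun _ => d := by
      ext x
      simp [cantorCylinder]
    exact this ▸ .biUnion c.to_countable fun d _ => .basic _ ⟨_, _, rfl⟩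

def finiteSpanningSetsInCantorCylinders (ρ : Measure (κ → ℕ → Bool)) [IsFiniteMeasure ρ] :
    ρ.FiniteSpanningSetsIn (cantorCylinders κ) :=
  ⟨fun _ => univ, fun _ => ⟨∅, fun _ => true, by simp [cantorCylinder]⟩,
    fun _ => measure_lt_top _ _, iUnion_const _⟩

lemma comp_mem_cantorCylinder_iff {α : Type*} {f : α → κ} (hf : Injective f)
    (s : Finset (α × ℕ)) (b : α × ℕ → Bool) (b' : κ × ℕ → Bool)
    (hb : ∀ a n, b' (f a, n) = b (a, n)) (x : κ → ℕ → Bool) :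
    (fun a => x (f a)) ∈ cantorCylinder s b ↔
      x ∈ cantorCylinder (s.map ((⟨f, hf⟩ : α ↪ κ).prodMap (.refl ℕ))) b' := by
  simp only [cantorCylinder, mem_ofPred_eq, Finset.forall_mem_map]
  simp [hb]

end CantorCylinder

namespace IsCantorProductMeasure

variable {κ α β : Type*} {μ ν : Measure (κ → ℕ → Bool)}

lemma isProbabilityMeasure (hμ : IsCantorProductMeasure μ) : IsProbabilityMeasure μ :=
  ⟨by simpa using hμ ∅ (fun _ => true)⟩

lemma unique (hμ : IsCantorProductMeasure μ) (hν : IsCantorProductMeasure ν) : μ = ν := by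
  have := hμ.isProbabilityMeasure
  refine ext_of_generate_finite _ (generateFrom_cantorCylinders κ).symm
    (isPiSystem_cantorCylinders κ) ?_ (by simp [hν.isProbabilityMeasure.measure_univ])
  rintro _ ⟨s, b, rfl⟩
  rw [cantorCylinder, hμ, hν]

lemma map_comp (hμ : IsCantorProductMeasure μ) {f : α → κ} (hf : Injective f) :
    IsCantorProductMeasure (μ.map fun x a => x (f a)) := by
  intro s b
  let F := (⟨f, hf⟩ : α ↪ κ).prodMap (.refl ℕ)
  have hpre : (fun x a => x (f a)) ⁻¹' cantorCylinder s b =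
      cantorCylinder (s.map F) (extend F b fun _ => true) :=
    Set.ext <| comp_mem_cantorCylinder_iff hf s b _
      fun a n => F.injective.extend_apply b _ (a, n)
  rw [← cantorCylinder, Measure.map_apply (by fun_prop) (measurableSet_cantorCylinder s b),
    hpre, cantorCylinder, hμ, Finset.card_map]

lemma map_prodMk_eq_prod (hμ : IsCantorProductMeasure μ) {f : α → κ} {g : β → κ}
    (hf : Injective f) (hg : Injective g) (hfg : ∀ a b, f a ≠ g b) :
    μ.map (fun x => (fun a => x (f a), fun b => x (g b))) =
      (μ.map fun x a => x (f a)).prod (μ.map fun x b => x (g b)) := by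
  classical
  have := hμ.isProbabilityMeasure
  symm
  refine Measure.prod_eq_generateFrom (generateFrom_cantorCylinders α)
    (generateFrom_cantorCylinders β) (isPiSystem_cantorCylinders α)
    (isPiSystem_cantorCylinders β) (finiteSpanningSetsInCantorCylinders _)
    (finiteSpanningSetsInCantorCylinders _) ?_
  rintro _ ⟨s, b, rfl⟩ _ ⟨t, c, rfl⟩
  let F := (⟨f, hf⟩ : α ↪ κ).prodMap (.refl ℕ)
  let G := (⟨g, hg⟩ : β ↪ κ).prodMap (.refl ℕ)
  have hFG : ∀ p q, F p ≠ G q := fun p q h => hfg p.1 q.1 (congrArg Prod.fst h)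
  let d := extend F b (extend G c fun _ => true)
  have hdF : ∀ a n, d (f a, n) = b (a, n) := fun a n => F.injective.extend_apply _ _ (a, n)
  have hdG : ∀ b n, d (g b, n) = c (b, n) := fun b' n => by
    change extend F b _ (G (b', n)) = _
    rw [extend_apply' _ _ _ fun ⟨p, hp⟩ => hFG p (b', n) hp]
    exact G.injective.extend_apply _ _ (b', n)
  have hpre : (fun x => (fun a => x (f a), fun b => x (g b))) ⁻¹'
      (cantorCylinder s b ×ˢ cantorCylinder t c) = cantorCylinder (s.map F ∪ t.map G) d := by
    ext x
    rw [cantorCylinder_union, mem_preimage, mem_prod, mem_inter_iff,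
      comp_mem_cantorCylinder_iff hf s b d hdF, comp_mem_cantorCylinder_iff hg t c d hdG]
  have hdisj : Disjoint (s.map F) (t.map G) := by
    simp only [Finset.disjoint_left, Finset.mem_map]
    rintro _ ⟨p, -, rfl⟩ ⟨q, -, hq⟩
    exact hFG p q hq.symm
  rw [Measure.map_apply (by fun_prop)
      ((measurableSet_cantorCylinder s b).prod (measurableSet_cantorCylinder t c)), hpre,
    cantorCylinder, hμ, Finset.card_union_of_disjoint hdisj, Finset.card_map, Finset.card_map,
    pow_add, cantorCylinder, map_comp hμ hf, cantorCylinder, map_comp hμ hg]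

end IsCantorProductMeasure

section Sections

variable {Ω A B : Type*}

lemma measure_le_measure_iInter_add_tsum_diff [MeasurableSpace Ω] (ρ : Measure Ω)
    (D : ℕ → Set Ω) :
    ρ (D 0) ≤ ρ (⋂ k, D k) + ∑' k, ρ (D k \ D (k + 1)) := by
  classical
  have hcover : D 0 ⊆ (⋂ k, D k) ∪ ⋃ k, (D k \ D (k + 1)) := by
    intro x hx0
    by_cases hx : ∀ k, x ∈ D k
    · exact .inl (mem_iInter.2 hx)
    · push Not at hx
      have hk0 : Nat.find hx ≠ 0 := fun h0 => Nat.find_spec hx (h0 ▸ hx0)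
      obtain ⟨k, hk⟩ := Nat.exists_eq_add_one_of_ne_zero hk0
      refine .inr (mem_iUnion.2 ⟨k, ?_, by simpa [hk] using Nat.find_spec hx⟩)
      by_contra hxk
      exact Nat.find_min hx (by omega) hxk
  calc ρ (D 0) ≤ ρ ((⋂ k, D k) ∪ ⋃ k, (D k \ D (k + 1))) := measure_mono hcover
    _ ≤ ρ (⋂ k, D k) + ∑' k, ρ (D k \ D (k + 1)) :=
      (measure_union_le _ _).trans (add_le_add le_rfl (measure_iUnion_le _))

lemma measure_setOf_measure_section_lt_le [MeasurableSpace Ω] [MeasurableSpace A]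
    [MeasurableSpace B] {ρ : Measure Ω} {ρ₁ : Measure A} {ρ₂ : Measure B}
    [IsProbabilityMeasure ρ₁] [SFinite ρ₂] {Φ : Ω → A × B} {Ψ : A → B → Ω}
    (hΦ : Measurable Φ) (hΨ : Measurable (uncurry Ψ)) (hΨΦ : ∀ x, Ψ (Φ x).1 (Φ x).2 = x)
    (hρ : ρ.map Φ = ρ₁.prod ρ₂) {S : Set Ω} (hS : MeasurableSet S) (t : ℝ≥0∞) :
    ρ {x | x ∈ S ∧ ρ₂ (Ψ (Φ x).1 ⁻¹' S) < t} ≤ t := by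
  set m : A → ℝ≥0∞ := fun a => ρ₂ (Ψ a ⁻¹' S)
  have hm : Measurable m := measurable_measure_prodMk_left (hΨ hS)
  set E : Set (A × B) := uncurry Ψ ⁻¹' S ∩ Prod.fst ⁻¹' {a | m a < t}
  have hE : MeasurableSet E := (hΨ hS).inter (measurable_fst (hm measurableSet_Iio))
  have hsection : ∀ a, ρ₂ (Prod.mk a ⁻¹' E) ≤ t := fun a => by
    by_cases ha : m a < t
    · exact (measure_mono inter_subset_left).trans ha.le
    · simp [E, ha]
  calc ρ {x | x ∈ S ∧ m (Φ x).1 < t} = ρ (Φ ⁻¹' E) := by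
        congr 1
        ext x
        simp [E, uncurry, hΨΦ]
    _ = (ρ₁.prod ρ₂) E := by rw [← hρ, Measure.map_apply hΦ hE]
    _ = ∫⁻ a, ρ₂ (Prod.mk a ⁻¹' E) ∂ρ₁ := Measure.prod_apply hE
    _ ≤ ∫⁻ _, t ∂ρ₁ := lintegral_mono hsection
    _ = t := by simp

lemma upperSemicontinuous_measure_prodMk_preimage [TopologicalSpace A] [TopologicalSpace B]
    [CompactSpace B] [MeasurableSpace B] (ρ : Measure B) [ρ.OuterRegular]
    {K : Set (A × B)} (hK : IsClosed K) :
    UpperSemicontinuous fun a => ρ (Prod.mk a ⁻¹' K) := by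
  intro a₀ t ht
  obtain ⟨U, hKU, hU, hUt⟩ := (Prod.mk a₀ ⁻¹' K).exists_isOpen_lt_of_lt t ht
  -- tube lemma: the `a` whose section leaves `U` form a closed set avoiding `a₀`
  have hV : IsClosed (Prod.fst '' (K ∩ Prod.snd ⁻¹' Uᶜ)) :=
    isClosedMap_fst_of_compactSpace _ (hK.inter (hU.isClosed_compl.preimage continuous_snd))
  have ha₀ : a₀ ∉ Prod.fst '' (K ∩ Prod.snd ⁻¹' Uᶜ) := by
    rintro ⟨⟨a, b⟩, ⟨hab, hbU⟩, rfl⟩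
    exact hbU (hKU hab)
  filter_upwards [hV.isOpen_compl.mem_nhds ha₀] with a ha
  refine (measure_mono fun b hb => ?_).trans_lt hUt
  by_contra hbU
  exact ha ⟨(a, b), ⟨hb, hbU⟩, rfl⟩

end Sections

section Concat

variable {α : Type*} [LinearOrder α] {ζ : α}

/-- The paper's `ȳ⌢ȳ'`, for `ȳ` indexed by `[0, ξ)` and `ȳ'` by `[ξ, ζ)`. -/
def concat (ξ : α) (y : {i : Set.Iio ζ // i.1 < ξ} → ℕ → Bool)
    (y' : {i : Set.Iio ζ // ξ ≤ i.1} → ℕ → Bool) : Set.Iio ζ → ℕ → Bool :=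
  fun i => if h : i.1 < ξ then y ⟨i, h⟩ else y' ⟨i, not_lt.mp h⟩

lemma continuous_concat (ξ : α) : Continuous (uncurry (concat (ζ := ζ) ξ)) := by
  refine continuous_pi fun i => ?_
  by_cases h : i.1 < ξ <;> simp only [uncurry, concat, h, dite_true, dite_false] <;> fun_prop

lemma measurable_concat (ξ : α) : Measurable (uncurry (concat (ζ := ζ) ξ)) := by
  refine measurable_pi_lambda _ fun i => ?_
  by_cases h : i.1 < ξ <;> simp only [uncurry, concat, h, dite_true, dite_false] <;> fun_prop

lemma concat_restrict (ξ : α) (x : Set.Iio ζ → ℕ → Bool) :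
    concat ξ (fun i => x i.1) (fun i => x i.1) = x := by
  funext i
  by_cases h : i.1 < ξ <;> simp [concat, h]

lemma restrict_concat_of_le {ξ η : α} (h : η ≤ ξ) (y : {i : Set.Iio ζ // i.1 < ξ} → ℕ → Bool)
    (y' : {i : Set.Iio ζ // ξ ≤ i.1} → ℕ → Bool) :
    (fun i : {i : Set.Iio ζ // i.1 < η} => concat ξ y y' i.1) =
      fun i => y ⟨i.1, i.2.trans_le h⟩ := by
  funext i
  simp [concat, i.2.trans_le h]

variable (ν : (ξ : α) → Measure ({i : Set.Iio ζ // ξ ≤ i.1} → ℕ → Bool))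

def sectionMeasure (S : Set (Set.Iio ζ → ℕ → Bool)) (η : α) (x : Set.Iio ζ → ℕ → Bool) :
    ℝ≥0∞ :=
  ν η (concat η (fun i => x i.1) ⁻¹' S)

variable {ν} {S : Set (Set.Iio ζ → ℕ → Bool)}

lemma measure_setOf_sectionMeasure_lt_le {μ : Measure (Set.Iio ζ → ℕ → Bool)}
    (hμ : IsCantorProductMeasure μ) {η : α} (hν : IsCantorProductMeasure (ν η))
    (hS : MeasurableSet S) (t : ℝ≥0∞) :
    μ {x | x ∈ S ∧ sectionMeasure ν S η x < t} ≤ t := by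
  have hsplit := hμ.map_prodMk_eq_prod (f := fun i : {i : Set.Iio ζ // i.1 < η} => i.1)
    (g := fun i : {i : Set.Iio ζ // η ≤ i.1} => i.1) Subtype.val_injective
    Subtype.val_injective fun a b h => (a.2.trans_le b.2).ne (congrArg Subtype.val h)
  rw [(hμ.map_comp Subtype.val_injective).unique hν] at hsplit
  have := (hμ.map_comp
    (Subtype.val_injective (p := fun i : Set.Iio ζ => i.1 < η))).isProbabilityMeasure
  have := hν.isProbabilityMeasure
  exact measure_setOf_measure_section_lt_le (by fun_prop) (measurable_concat η)
    (concat_restrict η) hsplit hS t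

lemma measure_setOf_concat_sectionMeasure_lt_le {ξ η : α} (hξη : ξ ≤ η)
    (hνξ : IsCantorProductMeasure (ν ξ)) (hνη : IsCantorProductMeasure (ν η))
    (y : {i : Set.Iio ζ // i.1 < ξ} → ℕ → Bool) (hS : MeasurableSet S) (t : ℝ≥0∞) :
    ν ξ {y' | concat ξ y y' ∈ S ∧ sectionMeasure ν S η (concat ξ y y') < t} ≤ t := by
  let f : {j : {i : Set.Iio ζ // ξ ≤ i.1} // j.1.1 < η} → {i : Set.Iio ζ // ξ ≤ i.1} :=
    Subtype.val
  let g : {i : Set.Iio ζ // η ≤ i.1} → {i : Set.Iio ζ // ξ ≤ i.1} :=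
    fun i => ⟨i.1, hξη.trans i.2⟩
  have hg : Injective g := fun a b h =>
    Subtype.ext (congrArg (fun j : {i : Set.Iio ζ // ξ ≤ i.1} => j.1) h)
  -- `Ψ` is `concat η` inside the tail `[ξ, ζ)`
  let Ψ : ({j : {i : Set.Iio ζ // ξ ≤ i.1} // j.1.1 < η} → ℕ → Bool) →
      ({i : Set.Iio ζ // η ≤ i.1} → ℕ → Bool) → {i : Set.Iio ζ // ξ ≤ i.1} → ℕ → Bool :=
    fun u w j => if h : j.1.1 < η then u ⟨j, h⟩ else w ⟨j.1, not_lt.mp h⟩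
  have hΨ : Measurable (uncurry Ψ) := by
    refine measurable_pi_lambda _ fun j => ?_
    by_cases h : j.1.1 < η <;> simp only [uncurry, Ψ, h, dite_true, dite_false] <;> fun_prop
  have hΨf : ∀ y', Ψ (fun a => y' (f a)) (fun b => y' (g b)) = y' := fun y' => by
    funext j
    by_cases h : j.1.1 < η <;> simp [Ψ, f, g, h]
  have hconcat : ∀ y' w, concat ξ y (Ψ (fun a => y' (f a)) w) =
      concat η (fun i => concat ξ y y' i.1) w := fun y' w => by
    funext i
    by_cases h₁ : i.1 < ξ
    · simp [concat, h₁, h₁.trans_le hξη]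
    · by_cases h₂ : i.1 < η <;> simp [concat, Ψ, f, h₁, h₂]
  have hsplit := hνξ.map_prodMk_eq_prod (f := f) Subtype.val_injective hg
    fun a b h => (a.2.trans_le b.2).ne (congrArg (·.1.1) h)
  rw [(hνξ.map_comp hg).unique hνη] at hsplit
  have := (hνξ.map_comp (Subtype.val_injective (p := fun j : {i : Set.Iio ζ // ξ ≤ i.1} =>
    j.1.1 < η))).isProbabilityMeasure
  have := hνη.isProbabilityMeasure
  have hS' : MeasurableSet (concat ξ y ⁻¹' S) :=
    (measurable_concat ξ).comp measurable_prodMk_left hS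
  have key := measure_setOf_measure_section_lt_le (by fun_prop) hΨ hΨf hsplit hS' t
  simp only [← preimage_comp, comp_def, hconcat] at key
  exact key

end Concat

section Prune

variable {α : Type*} [LinearOrder α] {ζ : α}
  (ν : (ξ : α) → Measure ({i : Set.Iio ζ // ξ ≤ i.1} → ℕ → Bool))

def prune (S : Set (Set.Iio ζ → ℕ → Bool)) (η : α) (δ : ℝ≥0∞) : Set (Set.Iio ζ → ℕ → Bool) :=
  S ∩ {x | δ ≤ sectionMeasure ν S η x}

def pruneSeq (C : Set (Set.Iio ζ → ℕ → Bool)) (ord : ℕ → α) (δ : ℕ → ℝ≥0∞) :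
    ℕ → Set (Set.Iio ζ → ℕ → Bool)
  | 0 => C
  | k + 1 => prune ν (pruneSeq C ord δ k) (ord k) (δ k)

variable {ν} {S C : Set (Set.Iio ζ → ℕ → Bool)} {η ξ : α}

lemma isClosed_prune [Countable (Set.Iio ζ)] (hν : IsCantorProductMeasure (ν η))
    (hS : IsClosed S) (δ : ℝ≥0∞) : IsClosed (prune ν S η δ) := by
  have := hν.isProbabilityMeasure
  have hcont : Continuous fun z : (Set.Iio ζ → ℕ → Bool) ×
      ({i : Set.Iio ζ // η ≤ i.1} → ℕ → Bool) => concat η (fun i => z.1 i.1) z.2 :=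
    (continuous_concat η).comp (f := fun z : (Set.Iio ζ → ℕ → Bool) ×
      ({i : Set.Iio ζ // η ≤ i.1} → ℕ → Bool) =>
        (fun i : {i : Set.Iio ζ // i.1 < η} => z.1 i.1, z.2)) (by fun_prop)
  exact hS.inter <|
    (upperSemicontinuous_measure_prodMk_preimage (ν η) (hS.preimage hcont)).isClosed_preimage δ

lemma measure_diff_prune_le {μ : Measure (Set.Iio ζ → ℕ → Bool)}
    (hμ : IsCantorProductMeasure μ) (hν : IsCantorProductMeasure (ν η)) (hS : MeasurableSet S)
    (δ : ℝ≥0∞) : μ (S \ prune ν S η δ) ≤ δ := by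
  refine le_trans (measure_mono fun x hx => ?_) (measure_setOf_sectionMeasure_lt_le hμ hν hS δ)
  exact ⟨hx.1, not_le.mp fun h => hx.2 ⟨hx.1, h⟩⟩

lemma measure_concat_preimage_diff_prune_le (hξη : ξ ≤ η) (hνξ : IsCantorProductMeasure (ν ξ))
    (hνη : IsCantorProductMeasure (ν η)) (y : {i : Set.Iio ζ // i.1 < ξ} → ℕ → Bool)
    (hS : MeasurableSet S) (δ : ℝ≥0∞) :
    ν ξ (concat ξ y ⁻¹' S \ concat ξ y ⁻¹' prune ν S η δ) ≤ δ := by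
  refine le_trans (measure_mono fun y' hy' => ?_)
    (measure_setOf_concat_sectionMeasure_lt_le hξη hνξ hνη y hS δ)
  exact ⟨hy'.1, not_le.mp fun h => hy'.2 ⟨hy'.1, h⟩⟩

lemma concat_preimage_prune_of_le {δ : ℝ≥0∞} (hηξ : η ≤ ξ)
    (y : {i : Set.Iio ζ // i.1 < ξ} → ℕ → Bool) (hne : (concat ξ y ⁻¹' prune ν S η δ).Nonempty) :
    concat ξ y ⁻¹' prune ν S η δ = concat ξ y ⁻¹' S := by
  obtain ⟨y₀, -, hy₀⟩ := hne
  -- at a cut `η ≤ ξ` the pruning condition only depends on `y`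
  ext y'
  simp only [prune, preimage_inter, mem_inter_iff, mem_preimage, mem_ofPred_eq,
    and_iff_left_iff_imp]
  intro _
  simpa only [mem_ofPred_eq, sectionMeasure, restrict_concat_of_le hηξ] using hy₀

lemma le_measure_concat_preimage_of_mem_prune {δ : ℝ≥0∞}
    {y : {i : Set.Iio ζ // i.1 < ξ} → ℕ → Bool} {y₀ : {i : Set.Iio ζ // ξ ≤ i.1} → ℕ → Bool}
    (h : concat ξ y y₀ ∈ prune ν S ξ δ) :
    δ ≤ ν ξ (concat ξ y ⁻¹' S) := by
  simpa only [mem_ofPred_eq, sectionMeasure, restrict_concat_of_le le_rfl] using h.2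

variable {ord : ℕ → α} {δ : ℕ → ℝ≥0∞}

lemma antitone_pruneSeq : Antitone (pruneSeq ν C ord δ) :=
  antitone_nat_of_succ_le fun _ => inter_subset_left

lemma isClosed_pruneSeq [Countable (Set.Iio ζ)] (hν : ∀ ξ, IsCantorProductMeasure (ν ξ))
    (hC : IsClosed C) (k : ℕ) : IsClosed (pruneSeq ν C ord δ k) := by
  induction k with
  | zero => exact hC
  | succ k ih => exact isClosed_prune (hν _) ih _

lemma measure_le_measure_iInter_pruneSeq_add [Countable (Set.Iio ζ)]
    {μ : Measure (Set.Iio ζ → ℕ → Bool)} (hμ : IsCantorProductMeasure μ)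
    (hν : ∀ ξ, IsCantorProductMeasure (ν ξ)) (hC : IsClosed C) :
    μ C ≤ μ (⋂ k, pruneSeq ν C ord δ k) + ∑' k, δ k :=
  calc μ C ≤ μ (⋂ k, pruneSeq ν C ord δ k) +
        ∑' k, μ (pruneSeq ν C ord δ k \ pruneSeq ν C ord δ (k + 1)) :=
      measure_le_measure_iInter_add_tsum_diff μ _
    _ ≤ μ (⋂ k, pruneSeq ν C ord δ k) + ∑' k, δ k := by
      gcongr with k
      exact measure_diff_prune_le hμ (hν _) (isClosed_pruneSeq hν hC k).measurableSet _

lemma le_measure_concat_preimage_iInter_pruneSeq_add [Countable (Set.Iio ζ)]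
    (hν : ∀ ξ, IsCantorProductMeasure (ν ξ)) (hC : IsClosed C) (n : ℕ)
    (y : {i : Set.Iio ζ // i.1 < ord n} → ℕ → Bool)
    (hne : (concat (ord n) y ⁻¹' ⋂ k, pruneSeq ν C ord δ k).Nonempty) :
    δ n ≤ ν (ord n) (concat (ord n) y ⁻¹' ⋂ k, pruneSeq ν C ord δ k) +
      ∑' j, δ (j + (n + 1)) := by
  obtain ⟨y₀, hy₀⟩ := hne
  simp only [preimage_iInter, mem_iInter] at hy₀ ⊢
  set T : ℕ → Set _ := fun k => concat (ord n) y ⁻¹' pruneSeq ν C ord δ k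
  have hT : Antitone T := fun _ _ h => preimage_mono (antitone_pruneSeq h)
  have hloss : ∀ k, ν (ord n) (T k \ T (k + 1)) ≤ δ k := fun k => by
    rcases le_total (ord k) (ord n) with h | h
    · simp [T, pruneSeq, concat_preimage_prune_of_le h y ⟨y₀, hy₀ (k + 1)⟩]
    · exact measure_concat_preimage_diff_prune_le h (hν _) (hν _) y
        (isClosed_pruneSeq hν hC k).measurableSet _
  calc δ n ≤ ν (ord n) (T n) := le_measure_concat_preimage_of_mem_prune (hy₀ (n + 1))
    _ = ν (ord n) (T (0 + (n + 1))) := by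
      simp [T, pruneSeq, concat_preimage_prune_of_le le_rfl y ⟨y₀, hy₀ (n + 1)⟩]
    _ ≤ ν (ord n) (⋂ j, T (j + (n + 1))) +
        ∑' j, ν (ord n) (T (j + (n + 1)) \ T (j + 1 + (n + 1))) := by
      simpa only [add_right_comm _ 1] using
        measure_le_measure_iInter_add_tsum_diff (ν (ord n)) fun j => T (j + (n + 1))
    _ ≤ ν (ord n) (⋂ k, T k) + ∑' j, δ (j + (n + 1)) := by
      rw [hT.iInter_nat_add]
      gcongr with j
      simpa only [add_right_comm _ 1] using hloss (j + (n + 1))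

end Prune

lemma ENNReal.tsum_inv_four_pow_succ : ∑' j : ℕ, (4⁻¹ : ℝ≥0∞) ^ (j + 1) = 3⁻¹ := by
  simp_rw [pow_succ, ENNReal.tsum_mul_right, ENNReal.tsum_geometric]
  rw [← ENNReal.mul_inv (by simp) (by simp), ENNReal.sub_mul (by simp),
    ENNReal.inv_mul_cancel (by simp) (by simp), one_mul]
  congr 1
  exact ENNReal.sub_eq_of_eq_add (by simp) (by norm_num)

lemma ENNReal.pos_of_le_add_mul_inv_three {a b : ℝ≥0∞} (ha : a ≠ 0) (ha' : a ≠ ∞)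
    (h : a ≤ b + a * 3⁻¹) : 0 < b := by
  refine pos_iff_ne_zero.2 fun hb => ?_
  rw [hb, zero_add] at h
  exact ((ENNReal.mul_lt_mul_right ha ha' (by norm_num : (3⁻¹ : ℝ≥0∞) < 1)).trans_eq
    (mul_one a)).not_ge h

/-- For a countable ordinal `ζ` and a closed set
`C ⊆ (2^ℕ)^ζ` of positive product measure there is a closed subset `C* ⊆ C` of
positive measure all of whose sections by initial segments are either empty or of
positive measure (in the corresponding tail product `(2^ℕ)^{[ξ,ζ)}`). -/
theorem exists_closed_subset_with_positive_sections
    (ζ : Ordinal) (hζ : Countable (Set.Iio ζ))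
    (μ : Measure ((Set.Iio ζ) → (ℕ → Bool))) (hμ : IsCantorProductMeasure μ)
    (ν : (ξ : Ordinal) → Measure ({i : Set.Iio ζ // ξ ≤ i.1} → (ℕ → Bool)))
    (hν : ∀ ξ : Ordinal, IsCantorProductMeasure (ν ξ))
    (C : Set ((Set.Iio ζ) → (ℕ → Bool))) (hC : IsClosed C) (hCpos : 0 < μ C) :
    ∃ Cstar : Set ((Set.Iio ζ) → (ℕ → Bool)), Cstar ⊆ C ∧ IsClosed Cstar ∧ 0 < μ Cstar ∧
      ∀ ξ : Ordinal, ξ < ζ → ∀ y : {i : Set.Iio ζ // i.1 < ξ} → (ℕ → Bool),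
        {y' : {i : Set.Iio ζ // ξ ≤ i.1} → (ℕ → Bool) |
            (fun i : Set.Iio ζ =>
              if h : i.1 < ξ then y ⟨i, h⟩ else y' ⟨i, not_lt.mp h⟩) ∈ Cstar} = ∅ ∨
        0 < ν ξ {y' : {i : Set.Iio ζ // ξ ≤ i.1} → (ℕ → Bool) |
            (fun i : Set.Iio ζ =>
              if h : i.1 < ξ then y ⟨i, h⟩ else y' ⟨i, not_lt.mp h⟩) ∈ Cstar} := by
  obtain ⟨ord, hord⟩ := countable_iff_exists_subset_range.mp (countable_coe_iff.mp hζ)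
  have := hμ.isProbabilityMeasure
  set δ : ℕ → ℝ≥0∞ := fun k => μ C * 4⁻¹ ^ (k + 1)
  have hδ : ∀ n, δ n ≠ 0 ∧ δ n ≠ ∞ := fun n =>
    ⟨mul_ne_zero hCpos.ne' (by simp), ENNReal.mul_ne_top (measure_ne_top μ C) (by simp)⟩
  have hδsum : ∀ n, ∑' j, δ (j + n) = μ C * 4⁻¹ ^ n * 3⁻¹ := fun n => by
    rw [← ENNReal.tsum_inv_four_pow_succ, ← ENNReal.tsum_mul_left]
    congr 1 with j
    ring
  refine ⟨⋂ k, pruneSeq ν C ord δ k, iInter_subset _ 0,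
    isClosed_iInter (isClosed_pruneSeq hν hC), ?_, fun ξ hξ y => ?_⟩
  · refine ENNReal.pos_of_le_add_mul_inv_three hCpos.ne' (measure_ne_top μ C) ?_
    have h := measure_le_measure_iInter_pruneSeq_add (δ := δ) (ord := ord) hμ hν hC
    rwa [show ∑' k, δ k = μ C * 3⁻¹ by simpa using hδsum 0] at h
  · obtain ⟨n, rfl⟩ := hord hξ
    refine (eq_empty_or_nonempty _).imp_right fun hne =>
      ENNReal.pos_of_le_add_mul_inv_three (hδ n).1 (hδ n).2 ?_
    have h := le_measure_concat_preimage_iInter_pruneSeq_add hν hC n y hne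
    rwa [hδsum (n + 1)] at h
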